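/- Consider the five-qubit state ρ^{(D_3^5)} = a |D_3^5⟩⟨D_3^5| + (1−a) I_5 / 32 with 0 ≤ a ≤ 1. If a > 5/13, then ρ^{(D_3^5)} is not 3-separable. -/

import Mathlib

open scoped BigOperators

noncomputable section

namespace Qubits

/-- The outer product `|ψ⟩⟨ψ|` of an `N`-qubit state vector, as a matrix in the
computational basis (indexed by configurations `Fin N → Fin 2`). -/
def outer {N : ℕ} (ψ : (Fin N → Fin 2) → ℂ) :
    Matrix (Fin N → Fin 2) (Fin N → Fin 2) ℂ :=
  Matrix.vecMulVec ψ (star ψ)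

/-- A pure `N`-qubit state is `k`-separable if `{1,…,N}` can be partitioned into `k`
(pairwise disjoint, nonempty) parts — the fibers of a surjection `P : Fin N → Fin k` —
such that `ψ` factorizes as a product of `k` functions, the `l`-th of which depends
only on the qubits in part `l`. -/
def kSepPure {N : ℕ} (k : ℕ) (ψ : (Fin N → Fin 2) → ℂ) : Prop :=
  ∃ P : Fin N → Fin k, Function.Surjective P ∧
    ∃ f : Fin k → ((Fin N → Fin 2) → ℂ),
      (∀ l x y, (∀ i, P i = l → x i = y i) → f l x = f l y) ∧
      ∀ x, ψ x = ∏ l, f l x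

/-- An `N`-qubit density matrix is `k`-separable if it is a convex combination of
projectors onto `k`-separable pure (unit) states, possibly separable with respect
to different partitions. -/
def kSep {N : ℕ} (k : ℕ) (ρ : Matrix (Fin N → Fin 2) (Fin N → Fin 2) ℂ) : Prop :=
  ∃ (n : ℕ) (p : Fin n → ℝ) (ψ : Fin n → (Fin N → Fin 2) → ℂ),
    (∀ s, 0 ≤ p s) ∧ (∑ s, p s = 1) ∧
    (∀ s, ∑ x, Complex.normSq (ψ s x) = 1) ∧
    (∀ s, kSepPure k (ψ s)) ∧
    ρ = ∑ s, (p s : ℂ) • outer (ψ s)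

/-- The `N`-qubit Dicke state with `m` excitations,
`|D_m^N⟩ = C(N,m)^{-1/2} Σ_{|S| = m} |e_S⟩`, as a vector of computational-basis
coefficients. -/
def dicke (N m : ℕ) : (Fin N → Fin 2) → ℂ :=
  fun x => if (Finset.univ.filter fun i => x i = 1).card = m
    then (((Real.sqrt (N.choose m))⁻¹ : ℝ) : ℂ) else 0

end Qubits

/-! For a weight-2 string `S` with zeros at `i ≠ j` consider the weight-3 strings `S + i`, `S + j`
and the strings `S + i + j`, `S` of weight 4 and 2. If `ψ` is a product over the blocks of a
3-partition and `i`, `j` lie in different blocks, then `ψ(S+i) ψ(S+j) = ψ(S+i+j) ψ(S)`; if they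
share a block, AM–GM bounds the term by `|ψ(S+i)|²` and `|ψ(S+j)|²`, and since three nonempty
blocks leave little room on five qubits, each weight-3 string occurs at most twice in this way.
Summing over the 60 triples and passing to mixtures by Cauchy–Schwarz, every 3-separable `ρ`
satisfies
`Σ |ρ(S+i, S+j)| ≤ Σ √(ρ(S+i+j, S+i+j) ρ(S, S)) + 2 Σ_{|x| = 3} ρ(x, x)`.
For the noisy Dicke state, with `b = (1 - a)/32`, this reads `6a ≤ 60|b| + 2(a + 10b)`, which
fails for `a > 5/13`.
-/

open Finset Function

namespace Qubits

section Mixture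

variable {N : ℕ} {σ : Type*} [Fintype σ] {p : σ → ℝ} {ψ : σ → (Fin N → Fin 2) → ℂ}

lemma sum_smul_outer_apply (x y : Fin N → Fin 2) :
    (∑ s, (p s : ℂ) • outer (ψ s)) x y = ∑ s, p s * (ψ s x * star (ψ s y)) := by
  simp [Matrix.sum_apply, outer, Matrix.vecMulVec_apply]

lemma norm_sum_smul_outer_apply_le (hp : ∀ s, 0 ≤ p s) (x y : Fin N → Fin 2) :
    ‖(∑ s, (p s : ℂ) • outer (ψ s)) x y‖ ≤ ∑ s, p s * (‖ψ s x‖ * ‖ψ s y‖) := by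
  rw [sum_smul_outer_apply]
  refine (norm_sum_le _ _).trans_eq (sum_congr rfl fun s _ => ?_)
  rw [norm_mul, norm_mul, norm_star, Complex.norm_real, Real.norm_of_nonneg (hp s)]

lemma norm_sum_smul_outer_apply_self (hp : ∀ s, 0 ≤ p s) (x : Fin N → Fin 2) :
    ‖(∑ s, (p s : ℂ) • outer (ψ s)) x x‖ = ∑ s, p s * ‖ψ s x‖ ^ 2 := by
  have h : (∑ s, (p s : ℂ) • outer (ψ s)) x x = ((∑ s, p s * ‖ψ s x‖ ^ 2 : ℝ) : ℂ) := by
    rw [sum_smul_outer_apply]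
    push_cast
    refine sum_congr rfl fun s _ => ?_
    rw [Complex.star_def, Complex.mul_conj, Complex.normSq_eq_norm_sq]
    push_cast
    rfl
  rw [h, Complex.norm_real, Real.norm_of_nonneg]
  exact sum_nonneg fun s _ => mul_nonneg (hp s) (sq_nonneg _)

lemma sum_mul_norm_mul_norm_le_sqrt (hp : ∀ s, 0 ≤ p s) (x y : Fin N → Fin 2) :
    ∑ s, p s * (‖ψ s x‖ * ‖ψ s y‖) ≤
      √(‖(∑ s, (p s : ℂ) • outer (ψ s)) x x‖ * ‖(∑ s, (p s : ℂ) • outer (ψ s)) y y‖) := by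
  rw [norm_sum_smul_outer_apply_self hp, norm_sum_smul_outer_apply_self hp]
  refine Real.le_sqrt_of_sq_le (sum_sq_le_sum_mul_sum_of_sq_le_mul _
    (fun s _ => mul_nonneg (hp s) (sq_nonneg _)) (fun s _ => mul_nonneg (hp s) (sq_nonneg _))
    fun s _ => le_of_eq (by ring))

end Mixture

theorem sum_norm_apply_le_of_kSep {N k : ℕ} {ι : Type*} (T : Finset ι)
    (X Y U V : ι → Fin N → Fin 2) (W : Finset (Fin N → Fin 2)) (c : ℝ)
    (hpure : ∀ ψ, kSepPure k ψ → ∑ t ∈ T, ‖ψ (X t)‖ * ‖ψ (Y t)‖ ≤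
      ∑ t ∈ T, ‖ψ (U t)‖ * ‖ψ (V t)‖ + c * ∑ x ∈ W, ‖ψ x‖ ^ 2)
    {ρ : Matrix (Fin N → Fin 2) (Fin N → Fin 2) ℂ} (hρ : kSep k ρ) :
    ∑ t ∈ T, ‖ρ (X t) (Y t)‖ ≤
      ∑ t ∈ T, √(‖ρ (U t) (U t)‖ * ‖ρ (V t) (V t)‖) + c * ∑ x ∈ W, ‖ρ x x‖ := by
  obtain ⟨n, p, ψ, hp, -, -, hsep, rfl⟩ := hρ
  calc ∑ t ∈ T, ‖(∑ s, (p s : ℂ) • outer (ψ s)) (X t) (Y t)‖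
      ≤ ∑ t ∈ T, ∑ s, p s * (‖ψ s (X t)‖ * ‖ψ s (Y t)‖) :=
        sum_le_sum fun t _ => norm_sum_smul_outer_apply_le hp _ _
    _ = ∑ s, p s * ∑ t ∈ T, ‖ψ s (X t)‖ * ‖ψ s (Y t)‖ := by
        rw [sum_comm]; simp_rw [mul_sum]
    _ ≤ ∑ s, p s * (∑ t ∈ T, ‖ψ s (U t)‖ * ‖ψ s (V t)‖ + c * ∑ x ∈ W, ‖ψ s x‖ ^ 2) :=
        sum_le_sum fun s _ => mul_le_mul_of_nonneg_left (hpure _ (hsep s)) (hp s)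
    _ = ∑ t ∈ T, ∑ s, p s * (‖ψ s (U t)‖ * ‖ψ s (V t)‖) +
          c * ∑ x ∈ W, ∑ s, p s * ‖ψ s x‖ ^ 2 := by
        simp_rw [mul_add, sum_add_distrib, mul_sum]
        rw [sum_comm, sum_comm (s := W)]
        simp_rw [mul_left_comm (p _) c]
    _ ≤ _ := by
        refine add_le_add (sum_le_sum fun t _ => sum_mul_norm_mul_norm_le_sqrt hp _ _) ?_
        simp_rw [norm_sum_smul_outer_apply_self hp, le_refl]

lemma prod_update_mul_prod_update {ι α κ R : Type*} [DecidableEq ι] [Fintype κ] [CommMonoid R]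
    {P : ι → κ} {f : κ → (ι → α) → R}
    (hf : ∀ l x y, (∀ i, P i = l → x i = y i) → f l x = f l y)
    {i j : ι} (hij : P i ≠ P j) (x : ι → α) (u v : α) :
    (∏ l, f l (update x i u)) * ∏ l, f l (update x j v) =
      (∏ l, f l (update (update x i u) j v)) * ∏ l, f l x := by
  have hoff : ∀ {l i} (y : ι → α) (w : α), P i ≠ l → f l (update y i w) = f l y :=
    fun y w hil => hf _ _ _ fun k hk => update_of_ne (by rintro rfl; exact hil hk) _ _
  simp_rw [← prod_mul_distrib]
  refine prod_congr rfl fun l _ => ?_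
  by_cases hil : P i = l
  · rw [hoff x v (hil ▸ hij.symm), hoff _ v (hil ▸ hij.symm)]
  · rw [hoff x u hil, update_comm (ne_of_apply_ne P hij), hoff _ u hil, mul_comm]

lemma sum_comp_le_mul_sum {ι α : Type*} [DecidableEq α] {s : Finset ι} {t : Finset α}
    {f : ι → α} {n : ℕ} (hf : ∀ i ∈ s, f i ∈ t) (hn : ∀ a ∈ t, #{i ∈ s | f i = a} ≤ n)
    {g : α → ℝ} (hg : ∀ a ∈ t, 0 ≤ g a) :
    ∑ i ∈ s, g (f i) ≤ n * ∑ a ∈ t, g a := by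
  rw [← sum_fiberwise_of_maps_to hf, mul_sum]
  refine sum_le_sum fun a ha => ?_
  rw [sum_congr rfl fun i hi => by rw [(mem_filter.1 hi).2], sum_const, nsmul_eq_mul]
  exact mul_le_mul_of_nonneg_right (by exact_mod_cast hn a ha) (hg a ha)

variable {N : ℕ}

def weight (x : Fin N → Fin 2) : ℕ := #{i | x i = 1}

lemma weight_update_one {x : Fin N → Fin 2} {i : Fin N} (hi : x i = 0) :
    weight (update x i 1) = weight x + 1 := by
  rw [weight, weight, ← card_insert_of_notMem (by simp [hi] : i ∉ ({j | x j = 1} : Finset _))]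
  congr 1
  ext j
  by_cases hj : j = i <;> simp [hj, update_apply]

lemma outer_dicke_apply (N m : ℕ) (x y : Fin N → Fin 2) :
    outer (dicke N m) x y =
      if weight x = m ∧ weight y = m then ((N.choose m : ℝ)⁻¹ : ℂ) else 0 := by
  have hsq : ((√(N.choose m : ℝ))⁻¹ : ℂ) * ((√(N.choose m : ℝ))⁻¹ : ℂ) =
      ((N.choose m : ℝ)⁻¹ : ℂ) := by
    rw [← mul_inv, ← Complex.ofReal_mul, Real.mul_self_sqrt (Nat.cast_nonneg _)]
  simp only [outer, Matrix.vecMulVec_apply, Pi.star_apply, dicke, weight]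
  split_ifs <;> simp_all

-- Irreducible, so that unification never evaluates the closed finset `raiseTriples 5 2`.
@[irreducible]
def raiseTriples (N m : ℕ) : Finset ((Fin N → Fin 2) × Fin N × Fin N) :=
  {t | weight t.1 = m ∧ t.1 t.2.1 = 0 ∧ t.1 t.2.2 = 0 ∧ t.2.1 ≠ t.2.2}

def raiseFst (t : (Fin N → Fin 2) × Fin N × Fin N) : Fin N → Fin 2 := update t.1 t.2.1 1

def raiseSnd (t : (Fin N → Fin 2) × Fin N × Fin N) : Fin N → Fin 2 := update t.1 t.2.2 1

def raiseBoth (t : (Fin N → Fin 2) × Fin N × Fin N) : Fin N → Fin 2 :=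
  update (raiseFst t) t.2.2 1

section raiseTriples

variable {m : ℕ} {t : (Fin N → Fin 2) × Fin N × Fin N}

@[simp]
lemma mem_raiseTriples :
    t ∈ raiseTriples N m ↔ weight t.1 = m ∧ t.1 t.2.1 = 0 ∧ t.1 t.2.2 = 0 ∧ t.2.1 ≠ t.2.2 := by
  simp [raiseTriples]

lemma weight_raiseFst (ht : t ∈ raiseTriples N m) : weight (raiseFst t) = m + 1 := by
  obtain ⟨hm, hi, -, -⟩ := mem_raiseTriples.1 ht
  rw [raiseFst, weight_update_one hi, hm]

lemma weight_raiseSnd (ht : t ∈ raiseTriples N m) : weight (raiseSnd t) = m + 1 := by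
  obtain ⟨hm, -, hj, -⟩ := mem_raiseTriples.1 ht
  rw [raiseSnd, weight_update_one hj, hm]

lemma weight_raiseBoth (ht : t ∈ raiseTriples N m) : weight (raiseBoth t) = m + 2 := by
  obtain ⟨-, -, hj, hij⟩ := mem_raiseTriples.1 ht
  rw [raiseBoth, weight_update_one (by rwa [raiseFst, update_of_ne hij.symm]),
    weight_raiseFst ht]

lemma raiseFst_ne_raiseSnd (ht : t ∈ raiseTriples N m) : raiseFst t ≠ raiseSnd t := by
  obtain ⟨-, hi, -, hij⟩ := mem_raiseTriples.1 ht
  intro h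
  have := congrFun h t.2.1
  simp [raiseFst, raiseSnd, update_of_ne hij, hi] at this

lemma update_raiseFst_zero (ht : t ∈ raiseTriples N m) : update (raiseFst t) t.2.1 0 = t.1 := by
  rw [raiseFst, update_idem, update_eq_self_iff]
  exact (mem_raiseTriples.1 ht).2.1.symm

end raiseTriples

set_option maxRecDepth 10000 in
lemma card_raiseTriples_five_two : #(raiseTriples 5 2) = 60 := by
  unfold raiseTriples; decide

set_option maxRecDepth 10000 in
lemma card_weight_eq_three : #{x : Fin 5 → Fin 2 | weight x = 3} = 10 := by decide

-- The blocks of a surjection `Fin 5 → Fin 3` have sizes `(3,1,1)` or `(2,2,1)`.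
set_option maxRecDepth 10000 in
lemma card_sameBlock_one_zero_le (P : Fin 5 → Fin 3) (hP : Surjective P)
    (x : Fin 5 → Fin 2) (hx : weight x = 3) :
    #{q : Fin 5 × Fin 5 | x q.1 = 1 ∧ x q.2 = 0 ∧ P q.1 = P q.2} ≤ 2 := by
  revert P x; decide

lemma sum_sameBlock_norm_mul_norm_le {P : Fin 5 → Fin 3} (hP : Surjective P)
    (ψ : (Fin 5 → Fin 2) → ℂ) :
    ∑ t ∈ raiseTriples 5 2 with P t.2.1 = P t.2.2, ‖ψ (raiseFst t)‖ * ‖ψ (raiseSnd t)‖ ≤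
      2 * ∑ x ∈ {x : Fin 5 → Fin 2 | weight x = 3}, ‖ψ x‖ ^ 2 := by
  set B := {t ∈ raiseTriples 5 2 | P t.2.1 = P t.2.2}
  have hswap : ∑ t ∈ B, ‖ψ (raiseSnd t)‖ ^ 2 = ∑ t ∈ B, ‖ψ (raiseFst t)‖ ^ 2 := by
    refine sum_equiv ((Equiv.refl _).prodCongr (Equiv.prodComm _ _)) (fun ⟨S, i, j⟩ => ?_)
      fun t _ => rfl
    simp only [B, mem_filter, mem_raiseTriples, Equiv.prodCongr_apply, Equiv.coe_refl,
      Equiv.prodComm_apply, Prod.map, id, Prod.fst_swap, Prod.snd_swap, ne_comm,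
      eq_comm (a := P i)]
    tauto
  have hfst : ∑ t ∈ B, ‖ψ (raiseFst t)‖ ^ 2 ≤
      ((2 : ℕ) : ℝ) * ∑ x ∈ {x : Fin 5 → Fin 2 | weight x = 3}, ‖ψ x‖ ^ 2 := by
    refine sum_comp_le_mul_sum (g := fun x => ‖ψ x‖ ^ 2)
      (fun t ht => by simpa using weight_raiseFst (mem_filter.1 ht).1)
      (fun x hx => ?_) fun x _ => by positivity
    refine le_trans (card_le_card_of_injOn Prod.snd (fun t ht => ?_) fun t ht t' ht' h => ?_)
      (card_sameBlock_one_zero_le P hP x (by simpa using hx))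
    · simp only [B, mem_coe, mem_filter] at ht
      obtain ⟨⟨htT, hPt⟩, rfl⟩ := ht
      obtain ⟨-, -, hj, hij⟩ := mem_raiseTriples.1 htT
      rw [mem_coe, mem_filter]
      exact ⟨mem_univ _, by simp [raiseFst], by simp [raiseFst, update_of_ne hij.symm, hj], hPt⟩
    · simp only [B, mem_coe, mem_filter] at ht ht'
      have hbase := update_raiseFst_zero ht'.1.1
      rw [ht'.2, ← ht.2, ← congrArg Prod.fst h, update_raiseFst_zero ht.1.1] at hbase
      exact Prod.ext hbase h
  calc ∑ t ∈ B, ‖ψ (raiseFst t)‖ * ‖ψ (raiseSnd t)‖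
      ≤ ∑ t ∈ B, (‖ψ (raiseFst t)‖ ^ 2 + ‖ψ (raiseSnd t)‖ ^ 2) / 2 :=
        sum_le_sum fun t _ => by linarith [two_mul_le_add_sq ‖ψ (raiseFst t)‖ ‖ψ (raiseSnd t)‖]
    _ = ∑ t ∈ B, ‖ψ (raiseFst t)‖ ^ 2 := by
        rw [← sum_div, sum_add_distrib, hswap]; ring
    _ ≤ 2 * ∑ x ∈ {x : Fin 5 → Fin 2 | weight x = 3}, ‖ψ x‖ ^ 2 :=
        mod_cast hfst

theorem sum_norm_raise_le_of_kSepPure {ψ : (Fin 5 → Fin 2) → ℂ} (h : kSepPure 3 ψ) :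
    ∑ t ∈ raiseTriples 5 2, ‖ψ (raiseFst t)‖ * ‖ψ (raiseSnd t)‖ ≤
      ∑ t ∈ raiseTriples 5 2, ‖ψ (raiseBoth t)‖ * ‖ψ t.1‖ +
        2 * ∑ x ∈ {x : Fin 5 → Fin 2 | weight x = 3}, ‖ψ x‖ ^ 2 := by
  obtain ⟨P, hP, f, hf, hψ⟩ := h
  have hsplit : ∀ t ∈ filter (fun t => ¬P t.2.1 = P t.2.2) (raiseTriples 5 2),
      ‖ψ (raiseFst t)‖ * ‖ψ (raiseSnd t)‖ = ‖ψ (raiseBoth t)‖ * ‖ψ t.1‖ := fun t ht => by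
    simp only [← norm_mul, hψ, raiseFst, raiseSnd, raiseBoth]
    rw [prod_update_mul_prod_update hf (mem_filter.1 ht).2]
  rw [← sum_filter_add_sum_filter_not (raiseTriples 5 2) (fun t => P t.2.1 = P t.2.2),
    sum_congr rfl hsplit, add_comm]
  exact add_le_add (sum_le_sum_of_subset_of_nonneg (filter_subset _ _) fun _ _ _ => by positivity)
    (sum_sameBlock_norm_mul_norm_le hP ψ)

def noisyDicke (N m : ℕ) (a b : ℝ) : Matrix (Fin N → Fin 2) (Fin N → Fin 2) ℂ :=
  (a : ℂ) • outer (dicke N m) + (b : ℂ) • 1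

section noisyDicke

variable {N m : ℕ} {a b : ℝ} {x y : Fin N → Fin 2}

lemma noisyDicke_apply :
    noisyDicke N m a b x y =
      ((a * (if weight x = m ∧ weight y = m then (N.choose m : ℝ)⁻¹ else 0) +
        if x = y then b else 0 : ℝ) : ℂ) := by
  rw [noisyDicke, Matrix.add_apply, Matrix.smul_apply, Matrix.smul_apply, outer_dicke_apply,
    Matrix.one_apply]
  split_ifs <;> simp

lemma norm_noisyDicke_apply_of_ne (hx : weight x = m) (hy : weight y = m) (hxy : x ≠ y) :
    ‖noisyDicke N m a b x y‖ = |a| / N.choose m := by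
  rw [noisyDicke_apply, if_pos ⟨hx, hy⟩, if_neg hxy, Complex.norm_real, Real.norm_eq_abs,
    add_zero, abs_mul, abs_inv, Nat.abs_cast, div_eq_mul_inv]

lemma norm_noisyDicke_apply_self (hx : weight x = m) :
    ‖noisyDicke N m a b x x‖ = |a / N.choose m + b| := by
  rw [noisyDicke_apply, if_pos ⟨hx, hx⟩, if_pos rfl, Complex.norm_real, Real.norm_eq_abs,
    div_eq_mul_inv]

lemma norm_noisyDicke_apply_self_of_ne (hx : weight x ≠ m) :
    ‖noisyDicke N m a b x x‖ = |b| := by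
  rw [noisyDicke_apply, if_neg (not_and_of_not_left _ hx), if_pos rfl, Complex.norm_real,
    Real.norm_eq_abs, mul_zero, zero_add]

end noisyDicke

theorem abs_le_of_kSep_noisyDicke {a b : ℝ} (h : kSep 3 (noisyDicke 5 3 a b)) :
    6 * |a| ≤ 60 * |b| + 20 * |a / 10 + b| := by
  have hc : ((Nat.choose 5 3 : ℕ) : ℝ) = 10 := by norm_num [Nat.choose]
  have hXY : ∀ t ∈ raiseTriples 5 2,
      ‖noisyDicke 5 3 a b (raiseFst t) (raiseSnd t)‖ = |a| / 10 := fun t ht => by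
    rw [norm_noisyDicke_apply_of_ne (weight_raiseFst ht) (weight_raiseSnd ht)
      (raiseFst_ne_raiseSnd ht), hc]
  have hUV : ∀ t ∈ raiseTriples 5 2, √(‖noisyDicke 5 3 a b (raiseBoth t) (raiseBoth t)‖ *
      ‖noisyDicke 5 3 a b t.1 t.1‖) = |b| := fun t ht => by
    rw [norm_noisyDicke_apply_self_of_ne (by rw [weight_raiseBoth ht]; decide),
      norm_noisyDicke_apply_self_of_ne (by rw [(mem_raiseTriples.1 ht).1]; decide),
      abs_mul_abs_self, Real.sqrt_mul_self_eq_abs]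
  have hW : ∀ x ∈ ({x | weight x = 3} : Finset (Fin 5 → Fin 2)),
      ‖noisyDicke 5 3 a b x x‖ = |a / 10 + b| := fun x hx => by
    rw [norm_noisyDicke_apply_self (by simpa using hx), hc]
  have key := sum_norm_apply_le_of_kSep (raiseTriples 5 2) raiseFst raiseSnd raiseBoth Prod.fst
    {x | weight x = 3} 2 (fun _ => sum_norm_raise_le_of_kSepPure) h
  rw [sum_congr rfl hXY, sum_congr rfl hUV, sum_congr rfl hW] at key
  simp only [sum_const, card_raiseTriples_five_two, card_weight_eq_three, nsmul_eq_mul] at key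
  push_cast at key
  linarith

end Qubits

open Qubits in
theorem dicke35_noise_not_threeSep_general
    (a : ℝ) (ha : a > 5 / 13) :
    ¬ kSep 3 ((a : ℂ) • outer (dicke 5 3) +
        (((1 - a) / 32 : ℝ) : ℂ) • (1 : Matrix (Fin 5 → Fin 2) (Fin 5 → Fin 2) ℂ)) := by
  intro h
  have hbound := abs_le_of_kSep_noisyDicke (b := (1 - a) / 32) h
  rw [abs_of_pos (by linarith : 0 < a), abs_of_pos (by linarith : 0 < a / 10 + (1 - a) / 32)]
    at hbound
  cases abs_cases ((1 - a) / 32) <;> linarith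

open Qubits in
/-- If `a > 5/13` then `a |D_3^5⟩⟨D_3^5| + (1−a) I/32` is not 3-separable. -/
theorem dicke35_noise_not_threeSep
    (a : ℝ) (ha0 : 0 ≤ a) (ha1 : a ≤ 1) (ha : a > 5 / 13) :
    ¬ kSep 3 ((a : ℂ) • outer (dicke 5 3) +
        (((1 - a) / 32 : ℝ) : ℂ) • (1 : Matrix (Fin 5 → Fin 2) (Fin 5 → Fin 2) ℂ)) :=
  dicke35_noise_not_threeSep_general a ha
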